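/- arXiv:2307.05218 — 3 statements merged into one kernel-verified Lean document; each statement's English description precedes it below -/
import Mathlib

section
/- If a binary relation R on processes is transitive, then its lifting R̂ to probability distributions is also transitive. -/
open BigOperators Finsupp

/-- Finitely supported (sub)distributions on `α`. -/
abbrev PDist (α : Type) := α →₀ NNReal

/-- Point distribution. -/
noncomputable def delta {α : Type} (a : α) : PDist α := Finsupp.single a 1

/-- Lifting of a relation on processes to probability distributions:
`(Δ, Θ) ∈ R̂` iff `Δ = Σ_i p_i·δ(P_i)`, `Θ = Σ_i p_i·δ(Q_i)` for a finite index
set with `Σ p_i = 1` and `R (P i) (Q i)` for all `i`. -/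
def Lift {α : Type} (R : α → α → Prop) (Δ Θ : PDist α) : Prop :=
  ∃ (n : ℕ) (p : Fin n → NNReal) (P Q : Fin n → α),
    (∑ i, p i) = 1 ∧
    Δ = ∑ i, p i • delta (P i) ∧
    Θ = ∑ i, p i • delta (Q i) ∧
    ∀ i, R (P i) (Q i)

/-!
Given `Δ R̂ Θ` and `Θ R̂ Ξ`, the two decompositions `Σ pᵢ δ(Qᵢ)` and `Σ q_j δ(S_j)` of the middle
distribution `Θ` are glued by the weights `r i j = pᵢ q_j / Θ(Qᵢ)` if `Qᵢ = S_j` (`0` otherwise),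
whose row sums are `pᵢ` and column sums `q_j`. Indexing by the pairs `(i, j)` then gives
`Δ = Σ r i j δ(Pᵢ)` and `Ξ = Σ r i j δ(T_j)`, and wherever `r i j ≠ 0` transitivity applies to
`R Pᵢ Qᵢ` and `R S_j T_j` because `Qᵢ = S_j`.
-/

variable {α ι κ : Type}

theorem sum_smul_delta_apply [Fintype ι] [DecidableEq α] (c : ι → NNReal) (F : ι → α) (a : α) :
    (∑ i, c i • delta (F i)) a = ∑ i, if F i = a then c i else 0 := by
  simp only [Finsupp.finsetSum_apply, Finsupp.smul_apply, delta, Finsupp.single_apply,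
    smul_eq_mul, mul_ite, mul_one, mul_zero]

theorem le_sum_smul_delta_apply [Fintype ι] (c : ι → NNReal) (F : ι → α) (i : ι) :
    c i ≤ (∑ k, c k • delta (F k)) (F i) := by
  classical
  rw [sum_smul_delta_apply]
  simpa using Finset.single_le_sum (f := fun k => if F k = F i then c k else 0)
    (fun _ _ => zero_le) (Finset.mem_univ i)

open Classical in
noncomputable def gluedWeight (Θ : PDist α) (p : ι → NNReal) (Q : ι → α) (q : κ → NNReal)
    (S : κ → α) (i : ι) (j : κ) : NNReal :=
  if Q i = S j then p i * q j / Θ (Q i) else 0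

theorem gluedWeight_comm (Θ : PDist α) (p : ι → NNReal) (Q : ι → α) (q : κ → NNReal)
    (S : κ → α) (i : ι) (j : κ) : gluedWeight Θ p Q q S i j = gluedWeight Θ q S p Q j i := by
  unfold gluedWeight
  by_cases h : Q i = S j
  · rw [if_pos h, if_pos h.symm, h, mul_comm]
  · rw [if_neg h, if_neg (Ne.symm h)]

theorem eq_of_gluedWeight_ne_zero {Θ : PDist α} {p : ι → NNReal} {Q : ι → α} {q : κ → NNReal}
    {S : κ → α} {i : ι} {j : κ} (h : gluedWeight Θ p Q q S i j ≠ 0) : Q i = S j := by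
  by_contra hne
  exact h (if_neg hne)

section Marginals

variable [Fintype ι] [Fintype κ] {Θ : PDist α} {p : ι → NNReal} {Q : ι → α} {q : κ → NNReal}
  {S : κ → α}

theorem sum_gluedWeight_right (hp : Θ = ∑ i, p i • delta (Q i))
    (hq : Θ = ∑ j, q j • delta (S j)) (i : ι) : ∑ j, gluedWeight Θ p Q q S i j = p i := by
  classical
  have factor : ∑ j, gluedWeight Θ p Q q S i j =
      (∑ j, if S j = Q i then q j else 0) * (p i / Θ (Q i)) := by
    rw [Finset.sum_mul]
    refine Finset.sum_congr rfl fun j _ => ?_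
    unfold gluedWeight
    by_cases h : Q i = S j
    · rw [if_pos h, if_pos h.symm]
      ring
    · rw [if_neg h, if_neg (Ne.symm h), zero_mul]
  rw [factor, ← sum_smul_delta_apply, ← hq]
  by_cases hΘ : Θ (Q i) = 0
  · have hpi : p i = 0 := le_antisymm (hΘ ▸ hp ▸ le_sum_smul_delta_apply p Q i) zero_le
    rw [hpi, zero_div, mul_zero]
  · exact mul_div_cancel₀ (p i) hΘ

theorem sum_gluedWeight_left (hp : Θ = ∑ i, p i • delta (Q i))
    (hq : Θ = ∑ j, q j • delta (S j)) (j : κ) : ∑ i, gluedWeight Θ p Q q S i j = q j := by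
  simp only [gluedWeight_comm Θ p Q q S _ j]
  exact sum_gluedWeight_right hq hp j

end Marginals

theorem Lift.of_fintype [Fintype ι] {R : α → α → Prop} {Δ Θ : PDist α} (p : ι → NNReal)
    (P Q : ι → α) (hp : ∑ i, p i = 1) (hΔ : Δ = ∑ i, p i • delta (P i))
    (hΘ : Θ = ∑ i, p i • delta (Q i)) (hR : ∀ i, p i ≠ 0 → R (P i) (Q i)) : Lift R Δ Θ := by
  classical
  -- Terms of weight zero are dropped, so that `R` holds on every remaining index.
  let e := Fintype.equivFin {i // p i ≠ 0}
  have reindex : ∀ {M : Type} [AddCommMonoid M] (f : ι → M), (∀ i, p i = 0 → f i = 0) →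
      ∑ k, f (e.symm k) = ∑ i, f i := fun f hf => by
    rw [e.symm.sum_comp (fun i => f i), ← Finset.sum_subtype {i | p i ≠ 0} (by simp),
      Finset.sum_filter_of_ne (p := (p · ≠ 0)) fun i _ hfi hpi => hfi (hf i hpi)]
  have reindex_smul_delta : ∀ F : ι → α,
      ∑ k, p (e.symm k) • delta (F (e.symm k)) = ∑ i, p i • delta (F i) := fun F =>
    reindex (fun i => p i • delta (F i)) fun i hpi => by rw [hpi, zero_smul]
  refine ⟨_, fun k => p (e.symm k), fun k => P (e.symm k), fun k => Q (e.symm k), ?_,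
    hΔ.trans (reindex_smul_delta P).symm, hΘ.trans (reindex_smul_delta Q).symm,
    fun k => hR _ (e.symm k).2⟩
  rw [reindex p fun _ => id, hp]

/-- Preservation of transitivity: if `R` is transitive then so is its lifting
`R̂` to probability distributions. -/
theorem lift_transitive {α : Type} (R : α → α → Prop) (hR : Transitive R) :
    Transitive (Lift R) := by
  rintro Δ Θ Ξ ⟨n, p, P, Q, hp, hΔ, hΘ, hPQ⟩ ⟨m, q, S, T, -, hΘ', hΞ, hST⟩
  let r : Fin n × Fin m → NNReal := fun x => gluedWeight Θ p Q q S x.1 x.2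
  have hrow := sum_gluedWeight_right hΘ hΘ'
  have hcol := sum_gluedWeight_left hΘ hΘ'
  refine Lift.of_fintype r (fun x => P x.1) (fun x => T x.2) ?_ ?_ ?_ ?_
  · rw [Fintype.sum_prod_type]
    simp only [r, hrow, hp]
  · simp only [hΔ, r, Fintype.sum_prod_type, ← Finset.sum_smul, hrow]
  · simp only [hΞ, r, Fintype.sum_prod_type_right, ← Finset.sum_smul, hcol]
  · rintro ⟨i, j⟩ hr
    exact hR (eq_of_gluedWeight_ne_zero hr ▸ hPQ i) (hST j)
end

section
/- If a preorder R on processes is a probabilistic correspondence simulation, then its lifting R̂ to distributions is a probabilistic correspondence simulation on distributions. -/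
open BigOperators Finsupp

/-- One reduction step lifted to distributions (Definition of reductions of
distributions): `Δ ⟶ Θ` when `Δ = Σ_i p_i·δ(P_i)`, for each `i` either
`P_i ⟶ Θ_i` or `Θ_i = δ(P_i)`, some `i` makes a step, and `Θ = Σ_i p_i·Θ_i`. -/
def DStep {α : Type} (step : α → PDist α → Prop) (Δ Θ : PDist α) : Prop :=
  ∃ (n : ℕ) (p : Fin n → NNReal) (P : Fin n → α) (Θi : Fin n → PDist α),
    (∑ i, p i) = 1 ∧
    Δ = ∑ i, p i • delta (P i) ∧
    (∀ i, step (P i) (Θi i) ∨ Θi i = delta (P i)) ∧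
    (∃ i, step (P i) (Θi i)) ∧
    Θ = ∑ i, p i • Θi i

/-- Many-step reduction `⟹` on distributions. -/
def MStep {α : Type} (step : α → PDist α → Prop) : PDist α → PDist α → Prop :=
  Relation.ReflTransGen (DStep step)

/-- Probabilistic (reduction) correspondence simulation on processes. -/
def PCSim {α : Type} (step : α → PDist α → Prop) (R : α → α → Prop) : Prop :=
  ∀ P Q, R P Q →
    (∀ Δ, MStep step (delta P) Δ → ∃ Θ, MStep step (delta Q) Θ ∧ Lift R Δ Θ) ∧
    (∀ Θ, MStep step (delta Q) Θ →
      ∃ Δ' Θ', MStep step (delta P) Δ' ∧ MStep step Θ Θ' ∧ Lift R Δ' Θ')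

/-- Probabilistic correspondence simulation on distributions. -/
def DCSim {α : Type} (step : α → PDist α → Prop)
    (S : PDist α → PDist α → Prop) : Prop :=
  ∀ Δ Θ, S Δ Θ →
    (∀ Δ', MStep step Δ Δ' → ∃ Θ', MStep step Θ Θ' ∧ S Δ' Θ') ∧
    (∀ Θ', MStep step Θ Θ' →
      ∃ Δ'' Θ'', MStep step Δ Δ'' ∧ MStep step Θ' Θ'' ∧ S Δ'' Θ'')

/-!
Lift a relation `r ⊆ α × PDist α` to distributions as the `ℝ≥0`-cone spanned by the pairs
`(δ a, T)` with `r a T`. On distributions of mass one, reductions are exactly the chains in the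
cone of "step or stay". As this cone contains the diagonal, its chains add up, so reductions of the
components of `Σ pᵢ • Δᵢ` recombine into one of the sum; conversely, a reduction of `Σ pᵢ • Δᵢ`
splits into reductions of the `Δᵢ`, by sharing each atom `q • δ a` of its decomposition among the
`Δᵢ` in proportion to `Δᵢ a`. Given `(Σ pᵢ • δ Pᵢ, Σ pᵢ • δ Qᵢ) ∈ R̂`, split a reduction of either
side along the components, answer each component with the simulation `R`, and recombine.
Reflexivity of `R` makes reductions preserve mass: from `P ⟶ T` and `R P P` the simulation yields
`(T, Θ) ∈ R̂`, so `T` has mass one.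
-/

section ReflTransGen

open Relation

variable {R M : Type*} [Semiring R] [AddCommMonoid M] [Module R M] {N : Submodule R (M × M)}

lemma Submodule.sum_smul_mk_mem {ι : Type*} [Fintype ι] (p : ι → R) {x y : ι → M}
    (h : ∀ i, (x i, y i) ∈ N) : (∑ i, p i • x i, ∑ i, p i • y i) ∈ N := by
  convert N.sum_mem (t := Finset.univ) fun i _ => N.smul_mem (p i) (h i) using 1
  ext <;> simp [Prod.fst_sum, Prod.snd_sum]

lemma reflTransGen_add_of_mk_self_mem (hN : ∀ x, (x, x) ∈ N) {a b c d : M}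
    (hab : ReflTransGen (fun x y => (x, y) ∈ N) a b)
    (hcd : ReflTransGen (fun x y => (x, y) ∈ N) c d) :
    ReflTransGen (fun x y => (x, y) ∈ N) (a + c) (b + d) :=
  (hab.lift (· + c) fun _ _ h => N.add_mem h (hN c)).trans
    (hcd.lift (b + ·) fun _ _ h => N.add_mem (hN b) h)

lemma reflTransGen_sum_smul_of_mk_self_mem (hN : ∀ x, (x, x) ∈ N) {ι : Type*} [Fintype ι]
    (p : ι → R) {x y : ι → M} (h : ∀ i, ReflTransGen (fun x y => (x, y) ∈ N) (x i) (y i)) :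
    ReflTransGen (fun x y => (x, y) ∈ N) (∑ i, p i • x i) (∑ i, p i • y i) := by
  have := Finset.sum_induction (s := Finset.univ) (fun i => p i • (x i, y i))
    (fun z => ReflTransGen (fun x y => (x, y) ∈ N) z.1 z.2)
    (fun _ _ => reflTransGen_add_of_mk_self_mem hN) .refl
    (fun i _ => (h i).lift (p i • ·) fun _ _ h => N.smul_mem (p i) h)
  simpa [Prod.fst_sum, Prod.snd_sum] using this

end ReflTransGen

namespace PDist

open Relation

variable {α : Type}

noncomputable def mass : PDist α →ₗ[NNReal] NNReal := Finsupp.linearCombination NNReal fun _ => 1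

@[simp] lemma mass_delta (a : α) : mass (delta a) = 1 := by
  simp [mass, delta]

lemma mass_sum_smul {ι : Type*} [Fintype ι] {p : ι → NNReal} (hp : ∑ i, p i = 1)
    {X : ι → PDist α} (hX : ∀ i, mass (X i) = 1) : mass (∑ i, p i • X i) = 1 := by
  simp [hX, hp]

lemma sum_mul_smul_delta_apply {ι : Type*} [Fintype ι] (q : ι → NNReal) (b : ι → α)
    (f : α → NNReal) (a : α) :
    (∑ j, (q j * f (b j)) • delta (b j)) a = (∑ j, q j • delta (b j)) a * f a := by
  simp only [Finsupp.finsetSum_apply, Finset.sum_mul]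
  refine Finset.sum_congr rfl fun j _ => ?_
  by_cases h : b j = a <;> simp [delta, h]

noncomputable def liftSpan (r : α → PDist α → Prop) : Submodule NNReal (PDist α × PDist α) :=
  Submodule.span NNReal {z | ∃ a T, r a T ∧ z = (delta a, T)}

variable {r : α → PDist α → Prop}

lemma mem_liftSpan_iff {Δ Θ : PDist α} :
    (Δ, Θ) ∈ liftSpan r ↔ ∃ (n : ℕ) (p : Fin n → NNReal) (a : Fin n → α) (T : Fin n → PDist α),
      (∀ i, r (a i) (T i)) ∧ Δ = ∑ i, p i • delta (a i) ∧ Θ = ∑ i, p i • T i := by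
  rw [liftSpan, Submodule.mem_span_set']
  constructor
  · rintro ⟨n, p, g, hg⟩
    choose a T hr hag using fun i => (g i).2
    simp only [hag, Prod.ext_iff, Prod.fst_sum, Prod.snd_sum, Prod.smul_fst, Prod.smul_snd] at hg
    exact ⟨n, p, a, T, hr, hg.1.symm, hg.2.symm⟩
  · rintro ⟨n, p, a, T, hr, rfl, rfl⟩
    refine ⟨n, p, fun i => ⟨(delta (a i), T i), a i, T i, hr i, rfl⟩, ?_⟩
    ext1 <;> simp [Prod.fst_sum, Prod.snd_sum]

lemma mk_self_mem_liftSpan (hr : ∀ a, r a (delta a)) (X : PDist α) : (X, X) ∈ liftSpan r := by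
  induction X using Finsupp.induction_linear with
  | zero => exact zero_mem _
  | add f g hf hg => exact add_mem hf hg
  | single a c =>
    have : (Finsupp.single a c, Finsupp.single a c) = c • (delta a, delta a) := by simp [delta]
    exact this ▸ Submodule.smul_mem _ c (Submodule.subset_span ⟨a, _, hr a, rfl⟩)

lemma eq_zero_of_zero_mem_liftSpan {Θ : PDist α} (h : (0, Θ) ∈ liftSpan r) : Θ = 0 := by
  obtain ⟨n, p, a, T, -, h0, rfl⟩ := mem_liftSpan_iff.1 h
  have hp : ∀ i, p i = 0 := fun i => by
    simpa [delta] using Finset.sum_eq_zero_iff.1 h0.symm i (Finset.mem_univ i)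
  simp [hp]

lemma mass_eq_of_mem_liftSpan (hr : ∀ a T, r a T → mass T = 1) {Δ Θ : PDist α}
    (h : (Δ, Θ) ∈ liftSpan r) : mass Θ = mass Δ :=
  have hle : liftSpan r ≤ LinearMap.eqLocus (mass ∘ₗ LinearMap.snd ..) (mass ∘ₗ LinearMap.fst ..) :=
    Submodule.span_le.2 <| by rintro _ ⟨a, T, hT, rfl⟩; simp [hr a T hT]
  hle h

lemma exists_sum_eq_of_sum_mem_liftSpan {ι : Type*} [Fintype ι] {X : ι → PDist α} {Θ : PDist α}
    (h : (∑ i, X i, Θ) ∈ liftSpan r) :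
    ∃ Y : ι → PDist α, (∀ i, (X i, Y i) ∈ liftSpan r) ∧ ∑ i, Y i = Θ := by
  obtain ⟨n, q, b, T, hr, hΔ, hΘ⟩ := mem_liftSpan_iff.1 h
  set Δ := ∑ i, X i
  -- the `j`-th atom `q j • δ (b j)` of `Δ` is shared among the `X i` in proportion to `X i (b j)`
  set c : ι → Fin n → NNReal := fun i j => q j * (X i (b j) / Δ (b j))
  have hX : ∀ i, X i = ∑ j, c i j • delta (b j) := by
    intro i
    ext a
    rw [sum_mul_smul_delta_apply q b (fun a => X i a / Δ a), ← hΔ, mul_div_cancel_of_imp']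
    intro h0
    exact le_zero_iff.1 (h0 ▸ Finsupp.le_def.1
      (Finset.single_le_sum (f := X) (fun j _ => zero_le) (Finset.mem_univ i)) a)
  have hc : ∀ j, ∑ i, c i j = q j := by
    intro j
    have hq : q j ≤ Δ (b j) := by
      rw [hΔ]
      simpa [delta] using
        Finset.single_le_sum (f := fun j => q j • delta (b j)) (fun j _ => zero_le)
          (Finset.mem_univ j) (b j)
    rw [← Finset.mul_sum, ← Finset.sum_div, ← Finsupp.finsetSum_apply, ← mul_div_assoc,
      mul_div_cancel_of_imp fun h0 => le_zero_iff.1 (h0 ▸ hq)]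
  refine ⟨fun i => ∑ j, c i j • T j, fun i => mem_liftSpan_iff.2 ⟨n, c i, b, T, hr, hX i, rfl⟩, ?_⟩
  simp_rw [hΘ, Finset.sum_comm (γ := ι), ← Finset.sum_smul, hc]

lemma exists_sum_smul_eq_of_mem_liftSpan (hr : ∀ a, r a (delta a)) {ι : Type*} [Fintype ι]
    {p : ι → NNReal} {X : ι → PDist α} {Θ : PDist α} (h : (∑ i, p i • X i, Θ) ∈ liftSpan r) :
    ∃ Y : ι → PDist α, (∀ i, (X i, Y i) ∈ liftSpan r) ∧ Θ = ∑ i, p i • Y i := by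
  classical
  obtain ⟨Z, hXZ, rfl⟩ := exists_sum_eq_of_sum_mem_liftSpan h
  refine ⟨fun i => if p i = 0 then X i else (p i)⁻¹ • Z i, fun i => ?_,
    Finset.sum_congr rfl fun i _ => ?_⟩
  · dsimp only
    split_ifs with hp
    · exact mk_self_mem_liftSpan hr _
    · simpa [inv_smul_smul₀ hp] using Submodule.smul_mem _ (p i)⁻¹ (hXZ i)
  · dsimp only
    split_ifs with hp
    · simp [hp, eq_zero_of_zero_mem_liftSpan (by simpa [hp] using hXZ i)]
    · rw [smul_inv_smul₀ hp]

lemma exists_reflTransGen_of_reflTransGen_sum_smul (hr : ∀ a, r a (delta a)) {ι : Type*}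
    [Fintype ι] {p : ι → NNReal} {X : ι → PDist α} {Θ : PDist α}
    (h : ReflTransGen (fun Δ Θ => (Δ, Θ) ∈ liftSpan r) (∑ i, p i • X i) Θ) :
    ∃ Y : ι → PDist α, (∀ i, ReflTransGen (fun Δ Θ => (Δ, Θ) ∈ liftSpan r) (X i) (Y i)) ∧
      Θ = ∑ i, p i • Y i := by
  induction h with
  | refl => exact ⟨X, fun _ => .refl, rfl⟩
  | tail _ hstep ih =>
    obtain ⟨Y, hXY, rfl⟩ := ih
    obtain ⟨Y', hYY', rfl⟩ := exists_sum_smul_eq_of_mem_liftSpan hr hstep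
    exact ⟨Y', fun i => (hXY i).tail (hYY' i), rfl⟩

lemma mass_eq_of_reflTransGen (hr : ∀ a T, r a T → mass T = 1) {Δ Θ : PDist α}
    (h : ReflTransGen (fun Δ Θ => (Δ, Θ) ∈ liftSpan r) Δ Θ) : mass Θ = mass Δ := by
  induction h with
  | refl => rfl
  | tail _ hstep ih => exact (mass_eq_of_mem_liftSpan hr hstep).trans ih

variable {step : α → PDist α → Prop}

def StepOrStay (step : α → PDist α → Prop) (a : α) (T : PDist α) : Prop :=
  step a T ∨ T = delta a

lemma dStep_delta {a : α} {T : PDist α} (h : step a T) : DStep step (delta a) T :=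
  ⟨1, fun _ => 1, fun _ => a, fun _ => T, by simp, by simp, fun _ => .inl h, ⟨0, h⟩, by simp⟩

lemma mem_liftSpan_of_dStep {Δ Θ : PDist α} (h : DStep step Δ Θ) :
    (Δ, Θ) ∈ liftSpan (StepOrStay step) :=
  have ⟨n, p, P, T, _, hΔ, hT, _, hΘ⟩ := h
  mem_liftSpan_iff.2 ⟨n, p, P, T, hT, hΔ, hΘ⟩

lemma reflGen_dStep_of_mem_liftSpan {Δ Θ : PDist α} (h : (Δ, Θ) ∈ liftSpan (StepOrStay step))
    (hΔ : mass Δ = 1) : ReflGen (DStep step) Δ Θ := by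
  obtain ⟨n, p, P, T, hT, hΔ', hΘ⟩ := mem_liftSpan_iff.1 h
  have hp : ∑ i, p i = 1 := by simpa [hΔ'] using hΔ
  by_cases hs : ∃ i, step (P i) (T i)
  · exact .single ⟨n, p, P, T, hp, hΔ', hT, hs, hΘ⟩
  · have : Θ = Δ := by
      rw [hΘ, hΔ']
      exact Finset.sum_congr rfl fun i _ => by rw [(hT i).resolve_left (not_exists.1 hs i)]
    exact this ▸ .refl

lemma reflTransGen_of_mStep {Δ Θ : PDist α} (h : MStep step Δ Θ) :
    ReflTransGen (fun Δ Θ => (Δ, Θ) ∈ liftSpan (StepOrStay step)) Δ Θ :=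
  ReflTransGen.mono (fun _ _ => mem_liftSpan_of_dStep) _ _ h

lemma mass_eq_one_of_stepOrStay (hm : ∀ a T, step a T → mass T = 1) (a : α) (T : PDist α)
    (h : StepOrStay step a T) : mass T = 1 :=
  h.elim (hm a T) fun h => h ▸ mass_delta a

lemma mStep_iff_reflTransGen (hm : ∀ a T, step a T → mass T = 1) {Δ Θ : PDist α}
    (hΔ : mass Δ = 1) :
    MStep step Δ Θ ↔ ReflTransGen (fun Δ Θ => (Δ, Θ) ∈ liftSpan (StepOrStay step)) Δ Θ := by
  refine ⟨reflTransGen_of_mStep, fun h => ?_⟩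
  induction h with
  | refl => exact .refl
  | tail hΔΘ hstep ih =>
    have hmass := (mass_eq_of_reflTransGen (mass_eq_one_of_stepOrStay hm) hΔΘ).trans hΔ
    exact ih.trans (reflGen_dStep_of_mem_liftSpan hstep hmass).to_reflTransGen

lemma mass_eq_of_mStep (hm : ∀ a T, step a T → mass T = 1) {Δ Θ : PDist α}
    (h : MStep step Δ Θ) : mass Θ = mass Δ :=
  mass_eq_of_reflTransGen (mass_eq_one_of_stepOrStay hm) (reflTransGen_of_mStep h)

lemma mStep_sum_smul (hm : ∀ a T, step a T → mass T = 1) {ι : Type*} [Fintype ι]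
    {p : ι → NNReal} (hp : ∑ i, p i = 1) {X Y : ι → PDist α} (hX : ∀ i, mass (X i) = 1)
    (h : ∀ i, MStep step (X i) (Y i)) : MStep step (∑ i, p i • X i) (∑ i, p i • Y i) := by
  rw [mStep_iff_reflTransGen hm (mass_sum_smul hp hX)]
  exact reflTransGen_sum_smul_of_mk_self_mem (mk_self_mem_liftSpan fun _ => Or.inr rfl) p
    fun i => (mStep_iff_reflTransGen hm (hX i)).1 (h i)

lemma exists_mStep_of_mStep_sum_smul (hm : ∀ a T, step a T → mass T = 1) {ι : Type*}
    [Fintype ι] {p : ι → NNReal} {X : ι → PDist α} {Θ : PDist α} (hX : ∀ i, mass (X i) = 1)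
    (h : MStep step (∑ i, p i • X i) Θ) :
    ∃ Y : ι → PDist α, (∀ i, MStep step (X i) (Y i)) ∧ Θ = ∑ i, p i • Y i := by
  obtain ⟨Y, hXY, rfl⟩ := exists_reflTransGen_of_reflTransGen_sum_smul (fun _ => Or.inr rfl)
    (reflTransGen_of_mStep h)
  exact ⟨Y, fun i => (mStep_iff_reflTransGen hm (hX i)).2 (hXY i), rfl⟩

variable {R : α → α → Prop}

lemma lift_iff {Δ Θ : PDist α} :
    Lift R Δ Θ ↔ mass Δ = 1 ∧ (Δ, Θ) ∈ liftSpan fun a T => ∃ b, R a b ∧ T = delta b := by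
  constructor
  · rintro ⟨n, p, P, Q, hp, rfl, rfl, hR⟩
    exact ⟨by simp [hp], mem_liftSpan_iff.2
      ⟨n, p, P, fun i => delta (Q i), fun i => ⟨Q i, hR i, rfl⟩, rfl, rfl⟩⟩
  · rintro ⟨hΔ, h⟩
    obtain ⟨n, p, P, T, hT, hΔ', hΘ⟩ := mem_liftSpan_iff.1 h
    choose Q hR hQ using hT
    refine ⟨n, p, P, Q, by simpa [hΔ'] using hΔ, hΔ', ?_, hR⟩
    simp_rw [hΘ, hQ]

lemma lift_sum_smul {ι : Type*} [Fintype ι] {p : ι → NNReal} (hp : ∑ i, p i = 1)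
    {X Y : ι → PDist α} (h : ∀ i, Lift R (X i) (Y i)) :
    Lift R (∑ i, p i • X i) (∑ i, p i • Y i) := by
  simp only [lift_iff] at h ⊢
  exact ⟨mass_sum_smul hp fun i => (h i).1, Submodule.sum_smul_mk_mem p fun i => (h i).2⟩

end PDist

open PDist in
theorem lift_pcsim_general {α : Type} (step : α → PDist α → Prop) (R : α → α → Prop)
    (hrefl : Reflexive R)
    (hsim : PCSim step R) : DCSim step (Lift R) := by
  have hm : ∀ a T, step a T → mass T = 1 := fun a T h =>
    have ⟨_, _, hT⟩ := (hsim a a (hrefl a)).1 T (.single (dStep_delta h))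
    (lift_iff.1 hT).1
  rintro _ _ ⟨n, p, P, Q, hp, rfl, rfl, hR⟩
  have hδ (x : Fin n → α) (i : Fin n) : mass (delta (x i)) = 1 := mass_delta _
  constructor
  · intro Δ' h
    obtain ⟨Y, hPY, rfl⟩ := exists_mStep_of_mStep_sum_smul hm (hδ P) h
    choose W hQW hYW using fun i => (hsim _ _ (hR i)).1 _ (hPY i)
    exact ⟨_, mStep_sum_smul hm hp (hδ Q) hQW, lift_sum_smul hp hYW⟩
  · intro Θ' h
    obtain ⟨Y, hQY, rfl⟩ := exists_mStep_of_mStep_sum_smul hm (hδ Q) h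
    choose A B hPA hYB hAB using fun i => (hsim _ _ (hR i)).2 _ (hQY i)
    have hY i : mass (Y i) = 1 := (mass_eq_of_mStep hm (hQY i)).trans (mass_delta _)
    exact ⟨_, _, mStep_sum_smul hm hp (hδ P) hPA, mStep_sum_smul hm hp hY hYB,
      lift_sum_smul hp hAB⟩

/-- Preservation of the correspondence property: if the preorder `R` is a
probabilistic correspondence simulation, then so is its lifting `R̂`. -/
theorem lift_pcsim {α : Type} (step : α → PDist α → Prop) (R : α → α → Prop)
    (hrefl : Reflexive R) (htrans : Transitive R)
    (hsim : PCSim step R) : DCSim step (Lift R) :=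
  lift_pcsim_general step R hrefl hsim
end

section
/- Let ⟦·⟧ be an encoding satisfying probabilistic operational completeness and weak probabilistic operational soundness with respect to structural congruence ≡, and suppose for every source term S*, S* has the success barb iff ⟦S*⟧ has the success barb, and this extends pointwise to distributions; further suppose ≡ preserves the success barb on distributions and reachability of the success barb is preserved by further reductions. Then the encoding is success sensitive: S can reach a distribution with the success barb if and only if ⟦S⟧ can. -/
open BigOperators Finsupp

/-- A distribution has the success barb if some process in its support has an
unguarded occurrence of success. -/
def DBarb {α : Type} (hasSucc : α → Prop) (Δ : PDist α) : Prop :=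
  ∃ a ∈ Δ.support, hasSucc a

/-- Success sensitiveness: if `⟦·⟧` satisfies probabilistic operational
completeness and weak probabilistic operational soundness w.r.t. `equiv`
(structural congruence), the encoding preserves and reflects the success barb
pointwise on distributions, `equiv` preserves the success barb, and success
barbs are persistent under reduction, then for every `S`:
`S⇓✓ iff ⟦S⟧⇓✓`. -/
theorem success_sensitiveness {σ τ : Type}
    (stepS : σ → PDist σ → Prop) (stepT : τ → PDist τ → Prop)
    (enc : σ → τ) (equiv : PDist τ → PDist τ → Prop)
    (hasSuccS : σ → Prop) (hasSuccT : τ → Prop)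
    -- completeness:
    (hcomp : ∀ (S : σ) (ΔS : PDist σ), MStep stepS (delta S) ΔS →
      ∃ ΔT, MStep stepT (delta (enc S)) ΔT ∧ equiv (ΔS.mapDomain enc) ΔT)
    -- weak soundness:
    (hsound : ∀ (S : σ) (ΔT : PDist τ), MStep stepT (delta (enc S)) ΔT →
      ∃ ΔS' ΔT', MStep stepS (delta S) ΔS' ∧ MStep stepT ΔT ΔT' ∧
        equiv (ΔS'.mapDomain enc) ΔT')
    -- (a) the encoding preserves and reflects success barbs on distributions:
    (ha : ∀ Δ : PDist σ, DBarb hasSuccS Δ ↔ DBarb hasSuccT (Δ.mapDomain enc))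
    -- (b) equiv preserves success barbs:
    (hb : ∀ Δ₁ Δ₂ : PDist τ, equiv Δ₁ Δ₂ →
      (DBarb hasSuccT Δ₁ ↔ DBarb hasSuccT Δ₂))
    -- (c) success barbs are persistent:
    (hc : ∀ Δ Δ' : PDist τ, MStep stepT Δ Δ' → DBarb hasSuccT Δ →
      DBarb hasSuccT Δ') :
    ∀ S : σ,
      (∃ Δ, MStep stepS (delta S) Δ ∧ DBarb hasSuccS Δ) ↔
      (∃ Δ, MStep stepT (delta (enc S)) Δ ∧ DBarb hasSuccT Δ) := by
  intro S
  constructor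
  · rintro ⟨Δ, hstep, hbarb⟩
    obtain ⟨ΔT, hT, heq⟩ := hcomp S Δ hstep
    exact ⟨ΔT, hT, (hb _ _ heq).mp ((ha Δ).mp hbarb)⟩
  · rintro ⟨ΔT, hstep, hbarb⟩
    obtain ⟨ΔS', ΔT', hS', hT', heq⟩ := hsound S ΔT hstep
    exact ⟨ΔS', hS', (ha ΔS').mpr ((hb _ _ heq).mpr (hc ΔT ΔT' hT' hbarb))⟩
end
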